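/- Let A be a real n×n matrix, B a real n×m matrix, and M (r×n), N (r×m) real matrices. For every s ∈ ℂ such that sI − A and sI + Aᵀ are invertible (real matrices coerced entrywise into ℂ): [Nᵀ M, −Bᵀ] · (s·I_{2n} − [[A, 0], [Mᵀ M, −Aᵀ]])⁻¹ · [B; Mᵀ N] + Nᵀ N = K(−s)ᵀ K(s), where K(s) = M (sI − A)⁻¹ B + N and K(−s)ᵀ = Bᵀ(−sI − Aᵀ)⁻¹Mᵀ + Nᵀ. -/

import Mathlib

/-!
The state matrix of the lift is block lower triangular, so its resolvent is block lower triangular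
with diagonal blocks `(sI - A)⁻¹`, `(sI + Aᵀ)⁻¹` and off-diagonal block
`(sI + Aᵀ)⁻¹ Mᵀ M (sI - A)⁻¹`. Multiplying out the transfer function gives exactly the four terms
of `K(-s)ᵀ K(s)`, using `(-sI - Aᵀ)⁻¹ = -(sI + Aᵀ)⁻¹`.
-/

open Matrix

/-- Entrywise coercion of a real matrix into a complex matrix. -/
def cm {α β : Type*} (M : Matrix α β ℝ) : Matrix α β ℂ :=
  M.map Complex.ofReal

namespace Matrix

variable {R : Type*} [CommRing R] {m n o p : Type*}

theorem inv_neg_eq_neg_inv [Fintype n] [DecidableEq n] (A : Matrix n n R) : (-A)⁻¹ = -A⁻¹ := by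
  by_cases hA : IsUnit A
  · exact inv_eq_right_inv <| by
      rw [neg_mul_neg, mul_nonsing_inv _ ((isUnit_iff_isUnit_det A).mp hA)]
  · have hnA : ¬IsUnit (-A) := fun h => hA (by simpa using h.neg)
    rw [nonsing_inv_eq_ringInverse, nonsing_inv_eq_ringInverse, Ring.inverse_non_unit _ hA,
      Ring.inverse_non_unit _ hnA, neg_zero]

theorem smul_one_sub_fromBlocks_zero₁₂ [DecidableEq n] [DecidableEq o] (s : R)
    (A : Matrix n n R) (C : Matrix o n R) (D : Matrix o o R) :
    s • (1 : Matrix (n ⊕ o) (n ⊕ o) R) - fromBlocks A 0 C D =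
      fromBlocks (s • 1 - A) 0 (-C) (s • 1 - D) := by
  rw [← fromBlocks_one, fromBlocks_smul, sub_eq_add_neg, fromBlocks_neg, fromBlocks_add]
  simp [sub_eq_add_neg]

theorem fromCols_mul_inv_fromBlocks_zero₁₂_mul_fromRows [Fintype n] [DecidableEq n] [Fintype o]
    [DecidableEq o] (C₁ : Matrix m n R) (C₂ : Matrix m o R) (X : Matrix n n R)
    (Z : Matrix o n R) (Y : Matrix o o R) (B₁ : Matrix n p R) (B₂ : Matrix o p R)
    (hXY : IsUnit X ↔ IsUnit Y) :
    fromCols C₁ C₂ * (fromBlocks X 0 Z Y)⁻¹ * fromRows B₁ B₂ =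
      C₁ * X⁻¹ * B₁ - C₂ * Y⁻¹ * Z * X⁻¹ * B₁ + C₂ * Y⁻¹ * B₂ := by
  rw [inv_fromBlocks_zero₁₂_of_isUnit_iff X Z Y hXY, fromCols_mul_fromBlocks,
    fromCols_mul_fromRows]
  simp only [Matrix.mul_zero, zero_add, Matrix.mul_neg, Matrix.add_mul, Matrix.neg_mul,
    Matrix.mul_assoc]
  abel

end Matrix

theorem hamiltonianLift_transfer_eq_spectralFactor {R : Type*} [CommRing R] {n m r : Type*}
    [Fintype n] [DecidableEq n] [Fintype r] (A : Matrix n n R) (B : Matrix n m R)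
    (M : Matrix r n R) (N : Matrix r m R) (s : R) (hX : IsUnit (s • (1 : Matrix n n R) - A))
    (hY : IsUnit (s • (1 : Matrix n n R) + Aᵀ)) :
    fromCols (Nᵀ * M) (-Bᵀ) *
          (s • (1 : Matrix (n ⊕ n) (n ⊕ n) R) - fromBlocks A 0 (Mᵀ * M) (-Aᵀ))⁻¹ *
          fromRows B (Mᵀ * N) + Nᵀ * N =
      (Bᵀ * (-(s • (1 : Matrix n n R)) - Aᵀ)⁻¹ * Mᵀ + Nᵀ) *
        (M * (s • (1 : Matrix n n R) - A)⁻¹ * B + N) := by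
  have hneg : -(s • (1 : Matrix n n R)) - Aᵀ = -(s • 1 + Aᵀ) := by abel
  rw [smul_one_sub_fromBlocks_zero₁₂, sub_neg_eq_add,
    fromCols_mul_inv_fromBlocks_zero₁₂_mul_fromRows _ _ _ _ _ _ _ (iff_of_true hX hY), hneg,
    inv_neg_eq_neg_inv]
  simp only [Matrix.mul_neg, Matrix.neg_mul, neg_neg, Matrix.mul_add, Matrix.add_mul,
    Matrix.mul_assoc]
  abel

theorem stmt_16 {n m r : ℕ} (A : Matrix (Fin n) (Fin n) ℝ)
    (B : Matrix (Fin n) (Fin m) ℝ)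
    (M : Matrix (Fin r) (Fin n) ℝ) (N : Matrix (Fin r) (Fin m) ℝ) :
    ∀ s : ℂ,
      IsUnit (s • (1 : Matrix (Fin n) (Fin n) ℂ) - cm A) →
      IsUnit (s • (1 : Matrix (Fin n) (Fin n) ℂ) + (cm A)ᵀ) →
      Matrix.fromCols ((cm N)ᵀ * cm M) (-(cm B)ᵀ) *
          (s • (1 : Matrix (Fin n ⊕ Fin n) (Fin n ⊕ Fin n) ℂ) -
            Matrix.fromBlocks (cm A) 0 ((cm M)ᵀ * cm M) (-(cm A)ᵀ))⁻¹ *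
          Matrix.fromRows (cm B) ((cm M)ᵀ * cm N) + (cm N)ᵀ * cm N =
        ((cm B)ᵀ * (-(s • (1 : Matrix (Fin n) (Fin n) ℂ)) - (cm A)ᵀ)⁻¹ * (cm M)ᵀ +
            (cm N)ᵀ) *
          (cm M * (s • (1 : Matrix (Fin n) (Fin n) ℂ) - cm A)⁻¹ * cm B + cm N) :=
  fun s hX hY => hamiltonianLift_transfer_eq_spectralFactor (cm A) (cm B) (cm M) (cm N) s hX hY
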